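/- Let d ≥ 1 be an integer, γ > 0, κ > 0, and s : ℤ^d → ℝ be such that 4γ²κ(2π)^{2d} s(m)² ≤ m² for every m ∈ ℤ^d with m ≠ 0. Then for every k ∈ ℤ^d and every m ∈ ℤ^d, every eigenvalue λ of the block matrix L_{k,m} — where L_{k,0} = [[0, 0], [2(2π)^{2d} γ² κ s(0)², 0]] and, for m ≠ 0, L_{k,m} = [[−i(k·m), m²/2], [−m²/2 + 2(2π)^{2d} γ² κ s(m)², −i(k·m)]] — satisfies Re λ = 0. -/

import Mathlib

/-
A 2×2 block with equal, purely imaginary diagonal entries `a` has eigenvalues `λ` with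
`(λ - a)² = b c`. When `b c` is a nonpositive real number, `λ - a` is purely imaginary, and so is
`λ`. For `m ≠ 0` the off-diagonal product is `(m²/2)(-m²/2 + T)` with `T ≤ m²/2` by the
smallness hypothesis; for `m = 0` it vanishes.
-/

/-- `lam` is an eigenvalue of the complex 2×2 matrix `A`. -/
def IsEigenvalue (A : Matrix (Fin 2) (Fin 2) ℂ) (lam : ℂ) : Prop :=
  ∃ v : Fin 2 → ℂ, v ≠ 0 ∧ A.mulVec v = lam • v

theorem Complex.re_eq_zero_of_sq_eq_ofReal_of_nonpos {z : ℂ} {r : ℝ} (hz : z ^ 2 = r)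
    (hr : r ≤ 0) : z.re = 0 := by
  have him : z.re * z.im = 0 := by
    have := congrArg Complex.im hz
    simp only [sq, Complex.mul_im, Complex.ofReal_im] at this
    linarith
  have hre : z.re ^ 2 - z.im ^ 2 ≤ 0 := by
    have := congrArg Complex.re hz
    simp only [sq, Complex.mul_re, Complex.ofReal_re] at this
    linarith
  rcases mul_eq_zero.mp him with h | h
  · exact h
  · nlinarith [sq_nonneg z.re]

theorem IsEigenvalue.sub_sq_eq_mul {a b c lam : ℂ} (h : IsEigenvalue !![a, b; c, a] lam) :
    (lam - a) ^ 2 = b * c := by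
  obtain ⟨v, hv, hAv⟩ := h
  have hker : (!![a, b; c, a] - lam • (1 : Matrix (Fin 2) (Fin 2) ℂ)).mulVec v = 0 := by
    rw [Matrix.sub_mulVec, Matrix.smul_mulVec, Matrix.one_mulVec, hAv, sub_self]
  have hdet := Matrix.exists_mulVec_eq_zero_iff.mp ⟨v, hv, hker⟩
  rw [Matrix.det_fin_two] at hdet
  simp only [Fin.isValue, Matrix.sub_apply, Matrix.of_apply, Matrix.cons_val', Matrix.cons_val_zero,
    Matrix.cons_val_fin_one, Matrix.smul_apply, Matrix.one_apply_eq, smul_eq_mul, mul_one,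
    Matrix.cons_val_one, ne_eq, zero_ne_one, not_false_eq_true, Matrix.one_apply_ne, mul_zero,
    sub_zero, one_ne_zero] at hdet
  linear_combination hdet

theorem IsEigenvalue.re_eq_zero {a b c lam : ℂ} {r : ℝ}
    (h : IsEigenvalue !![a, b; c, a] lam) (ha : a.re = 0) (hbc : b * c = r) (hr : r ≤ 0) :
    lam.re = 0 := by
  have := Complex.re_eq_zero_of_sq_eq_ofReal_of_nonpos (h.sub_sq_eq_mul.trans hbc) hr
  rwa [Complex.sub_re, ha, sub_zero] at this

theorem stmt4_general (d : ℕ) (γ κ : ℝ)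
    (s : (Fin d → ℤ) → ℝ)
    (hsmall : ∀ m : Fin d → ℤ, m ≠ 0 →
      4 * γ ^ 2 * κ * (2 * Real.pi) ^ (2 * d) * (s m) ^ 2 ≤ ((∑ j, (m j) ^ 2 : ℤ) : ℝ)) :
    ∀ (k m : Fin d → ℤ) (lam : ℂ),
      IsEigenvalue
        (if m = 0 then
          !![0, 0; ((2 * (2 * Real.pi) ^ (2 * d) * γ ^ 2 * κ * (s 0) ^ 2 : ℝ) : ℂ), 0]
        else
          !![-Complex.I * ((∑ j, k j * m j : ℤ) : ℂ), ((∑ j, (m j) ^ 2 : ℤ) : ℂ) / 2;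
             -((∑ j, (m j) ^ 2 : ℤ) : ℂ) / 2
               + ((2 * (2 * Real.pi) ^ (2 * d) * γ ^ 2 * κ * (s m) ^ 2 : ℝ) : ℂ),
             -Complex.I * ((∑ j, k j * m j : ℤ) : ℂ)]) lam
      → lam.re = 0 := by
  intro k m lam h
  split_ifs at h with hm
  · exact h.re_eq_zero Complex.zero_re (r := 0) (by simp) le_rfl
  · set M : ℤ := ∑ j, (m j) ^ 2
    set T : ℝ := 2 * (2 * Real.pi) ^ (2 * d) * γ ^ 2 * κ * (s m) ^ 2
    have hM : (0 : ℝ) ≤ M := by exact_mod_cast Finset.sum_nonneg fun j _ => sq_nonneg (m j)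
    have hT : T ≤ M / 2 := by linarith [hsmall m hm]
    refine h.re_eq_zero (by simp) (r := M / 2 * (-M / 2 + T)) (by push_cast; ring) ?_
    exact mul_nonpos_of_nonneg_of_nonpos (by linarith) (by linarith)

theorem stmt4 (d : ℕ) (hd : 1 ≤ d) (γ κ : ℝ) (hγ : 0 < γ) (hκ : 0 < κ)
    (s : (Fin d → ℤ) → ℝ)
    (hsmall : ∀ m : Fin d → ℤ, m ≠ 0 →
      4 * γ ^ 2 * κ * (2 * Real.pi) ^ (2 * d) * (s m) ^ 2 ≤ ((∑ j, (m j) ^ 2 : ℤ) : ℝ)) :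
    ∀ (k m : Fin d → ℤ) (lam : ℂ),
      IsEigenvalue
        (if m = 0 then
          !![0, 0; ((2 * (2 * Real.pi) ^ (2 * d) * γ ^ 2 * κ * (s 0) ^ 2 : ℝ) : ℂ), 0]
        else
          !![-Complex.I * ((∑ j, k j * m j : ℤ) : ℂ), ((∑ j, (m j) ^ 2 : ℤ) : ℂ) / 2;
             -((∑ j, (m j) ^ 2 : ℤ) : ℂ) / 2
               + ((2 * (2 * Real.pi) ^ (2 * d) * γ ^ 2 * κ * (s m) ^ 2 : ℝ) : ℂ),
             -Complex.I * ((∑ j, k j * m j : ℤ) : ℂ)]) lam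
      → lam.re = 0 :=
  stmt4_general d γ κ s hsmall
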